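/- arXiv:2104.01218 — 3 statements merged into one kernel-verified Lean document; each statement's English description precedes it below -/
import Mathlib

section
/- Let S = C[x_0,...,x_r], l a nonzero linear form, f_i = x_i^{d-1} * l, and J = (f_0,...,f_r). Then the saturation degree of J equals (r+1)d - 2r, i.e., the least integer t_0 such that J_t = sat(J)_t for all t >= t_0 is (r+1)d - 2r. -/
/-!
The hyperplane example, saturation degree: in `S = ℂ[x₀,…,x_r]` with `r ≥ 1`, let `ℓ` be a
nonzero linear form, `d ≥ 2`, `fᵢ = xᵢ^(d-1)·ℓ` and `J = (f₀,…,f_r)`.  Then the saturation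
degree of `J` — the least `t₀` such that `J_t = sat(J)_t` for all `t ≥ t₀` — equals
`(r+1)d - 2r`.
-/

open MvPolynomial

noncomputable section

/-- The polynomial ring `S = ℂ[x₀, …, x_r]` in `r + 1` variables. -/
abbrev PolyRing (r : ℕ) := MvPolynomial (Fin (r + 1)) ℂ

/-- The irrelevant maximal ideal `𝔪 = (x₀, …, x_r)`. -/
def irrelevantIdeal (r : ℕ) : Ideal (PolyRing r) :=
  Ideal.span (Set.range MvPolynomial.X)

/-- The saturation `sat(J) = { f | 𝔪^k · f ⊆ J for some k ≥ 0 }`. -/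
def satIdeal {r : ℕ} (J : Ideal (PolyRing r)) : Ideal (PolyRing r) :=
  ⨆ k : ℕ, J.colon ((irrelevantIdeal r ^ k : Ideal (PolyRing r)) : Set (PolyRing r))

/-!
Write `d = n + 2`, so that `J = ℓ · I` with `I = (x₀^(n+1), …, x_r^(n+1))`. A monomial of degree
`> (r+1)n` has some exponent `> n`, so `𝔪^((r+1)n+1) ⊆ I` and hence `ℓ ∈ sat(J)`. Conversely `ℓ` is
prime and, as `r ≥ 1`, cannot divide two different variables, so `sat(J) ⊆ (ℓ)`; a homogeneous
`g = ℓh ∈ sat(J)` of degree `≥ (r+1)n + 2` has `h` homogeneous of degree `> (r+1)n`, so `h ∈ I` and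
`g ∈ J`. In degree `(r+1)n + 1` the element `x₀ⁿ⋯x_rⁿ · ℓ` lies in `sat(J)` but not in `J`.
-/

namespace MvPolynomial

variable {σ R : Type*}

section CommSemiring

variable [CommSemiring R]

variable (σ R) in
def varPowIdeal (n : ℕ) : Ideal (MvPolynomial σ R) :=
  Ideal.span (Set.range fun i => X i ^ n)

theorem mem_varPowIdeal_iff {n : ℕ} {p : MvPolynomial σ R} :
    p ∈ varPowIdeal σ R n ↔ ∀ a ∈ p.support, ∃ i, n ≤ a i := by
  have hgen : Set.range (fun i => (X i : MvPolynomial σ R) ^ n) =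
      (monomial · 1) '' Set.range fun i => Finsupp.single i n := by
    rw [← Set.range_comp]
    simp only [Function.comp_def, X_pow_eq_monomial]
  simp [varPowIdeal, hgen, mem_ideal_span_monomial_image, Finsupp.single_le_iff]

theorem monomial_one_notMem_varPowIdeal [Nontrivial R] {n : ℕ} {a : σ →₀ ℕ}
    (ha : ∀ i, a i < n) : monomial a (1 : R) ∉ varPowIdeal σ R n := by
  classical
  simpa [mem_varPowIdeal_iff, support_monomial] using ha

theorem IsHomogeneous.mem_pow_idealOfVars {n : ℕ} {p : MvPolynomial σ R}
    (hp : p.IsHomogeneous n) : p ∈ idealOfVars σ R ^ n :=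
  (mem_pow_idealOfVars_iff n p).mpr fun a ha => by
    rw [Finsupp.degree_eq_weight_one]
    exact (hp (mem_support_iff.mp ha)).ge

theorem pow_idealOfVars_le_varPowIdeal [Fintype σ] (n : ℕ) :
    idealOfVars σ R ^ (Fintype.card σ * n + 1) ≤ varPowIdeal σ R (n + 1) := by
  intro p hp
  rw [mem_pow_idealOfVars_iff] at hp
  refine mem_varPowIdeal_iff.mpr fun a ha => ?_
  have hlt : ∑ _i : σ, n < ∑ i, a i := by
    rw [← Finsupp.degree_eq_sum, Finset.sum_const, Finset.card_univ, smul_eq_mul]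
    exact hp a ha
  obtain ⟨i, -, hi⟩ := Finset.exists_lt_of_sum_lt hlt
  exact ⟨i, hi⟩

theorem IsHomogeneous.exists_eq_mul_of_dvd {l g : MvPolynomial σ R} {m n : ℕ}
    (hl : l.IsHomogeneous m) (hg : g.IsHomogeneous n) (hdvd : l ∣ g) :
    ∃ h : MvPolynomial σ R, h.IsHomogeneous (n - m) ∧ g = l * h := by
  let := gradedAlgebra (σ := σ) (R := R)
  obtain ⟨h, rfl⟩ := hdvd
  have hdecomp (x : MvPolynomial σ R) (k : ℕ) :
      (DirectSum.decompose (homogeneousSubmodule σ R) x k : MvPolynomial σ R) =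
        homogeneousComponent k x :=
    decomposition.decompose'_apply x k
  have hcomp := DirectSum.coe_decompose_mul_of_left_mem (homogeneousSubmodule σ R) n hl (b := h)
  rw [hdecomp, hdecomp, homogeneousComponent_eq_self hg] at hcomp
  split_ifs at hcomp
  · exact ⟨_, homogeneousComponent_isHomogeneous _ _, hcomp⟩
  · exact ⟨0, isHomogeneous_zero _ _ _, by rw [hcomp, mul_zero]⟩

end CommSemiring

theorem IsHomogeneous.prime_of_degree_one {K : Type*} [Field K] {l : MvPolynomial σ K}
    (hl : l.IsHomogeneous 1) (hl0 : l ≠ 0) : Prime l := by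
  refine (irreducible_of_totalDegree_eq_one (hl.totalDegree hl0) fun x hx => ?_).prime
  obtain ⟨a, ha⟩ := ne_zero_iff.mp hl0
  exact isUnit_iff_ne_zero.mpr (ne_zero_of_dvd_ne_zero ha (hx a))

theorem eq_of_prime_dvd_X_of_dvd_X [CommRing R] [IsDomain R] {p : MvPolynomial σ R}
    (hp : Prime p) {i j : σ} (hi : p ∣ X i) (hj : p ∣ X j) : i = j :=
  X_dvd_X.mp ((hp.associated_of_dvd X_prime hi).symm.dvd.trans hj)

end MvPolynomial

theorem Ideal.span_singleton_mul_span_range {S ι : Type*} [CommSemiring S] (a : S) (f : ι → S) :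
    Ideal.span {a} * Ideal.span (Set.range f) = Ideal.span (Set.range fun i => f i * a) := by
  rw [Ideal.span_mul_span', Set.singleton_mul, ← Set.range_comp]
  simp only [Function.comp_def, mul_comm]

theorem mem_satIdeal_iff {r : ℕ} {J : Ideal (PolyRing r)} {g : PolyRing r} :
    g ∈ satIdeal J ↔ ∃ k, ∀ p ∈ irrelevantIdeal r ^ k, p * g ∈ J := by
  have hmono : Monotone fun k : ℕ => J.colon (irrelevantIdeal r ^ k : Ideal (PolyRing r)) :=
    fun i j hij => Submodule.colon_mono le_rfl (Ideal.pow_le_pow_right hij)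
  simp [satIdeal, Submodule.mem_iSup_of_directed _ hmono.directed_le, Submodule.mem_colon,
    mul_comm]

theorem le_satIdeal {r : ℕ} (J : Ideal (PolyRing r)) : J ≤ satIdeal J :=
  fun _ hg => mem_satIdeal_iff.mpr ⟨0, fun p _ => J.mul_mem_left p hg⟩

theorem satIdeal_le_span_singleton {r : ℕ} (hr : 1 ≤ r) {l : PolyRing r} (hl : Prime l)
    {J : Ideal (PolyRing r)} (hJ : J ≤ Ideal.span {l}) : satIdeal J ≤ Ideal.span {l} := by
  intro g hg
  obtain ⟨k, hk⟩ := mem_satIdeal_iff.mp hg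
  rw [Ideal.mem_span_singleton]
  by_contra hlg
  have hdvd (i : Fin (r + 1)) : l ∣ X i := by
    have hXi : X i ^ k * g ∈ Ideal.span {l} :=
      hJ (hk _ (Ideal.pow_mem_pow (Ideal.subset_span (Set.mem_range_self i)) k))
    exact hl.dvd_of_dvd_pow ((hl.dvd_or_dvd (Ideal.mem_span_singleton.mp hXi)).resolve_right hlg)
  obtain ⟨i, j, hij⟩ := (Fin.nontrivial_iff_two_le.mpr (by omega : 2 ≤ r + 1)).exists_pair_ne
  exact hij (eq_of_prime_dvd_X_of_dvd_X hl (hdvd i) (hdvd j))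

theorem irrelevantIdeal_pow_le_varPowIdeal (r n : ℕ) :
    irrelevantIdeal r ^ ((r + 1) * n + 1) ≤ varPowIdeal (Fin (r + 1)) ℂ (n + 1) := by
  have := pow_idealOfVars_le_varPowIdeal (σ := Fin (r + 1)) (R := ℂ) n
  rwa [Fintype.card_fin] at this

theorem mem_satIdeal_span_singleton_mul_varPowIdeal {r : ℕ} (l : PolyRing r) (n : ℕ) :
    l ∈ satIdeal (Ideal.span {l} * varPowIdeal (Fin (r + 1)) ℂ (n + 1)) :=
  mem_satIdeal_iff.mpr ⟨(r + 1) * n + 1, fun p hp => by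
    rw [mul_comm p]
    exact Ideal.mul_mem_mul (Ideal.mem_span_singleton_self l)
      (irrelevantIdeal_pow_le_varPowIdeal r n hp)⟩

theorem mem_iff_mem_satIdeal_of_isHomogeneous {r n t : ℕ} (hr : 1 ≤ r)
    {l g : PolyRing r} (hl : l.IsHomogeneous 1) (hl0 : l ≠ 0) (hg : g.IsHomogeneous t)
    (ht : (r + 1) * n + 2 ≤ t) :
    g ∈ Ideal.span {l} * varPowIdeal (Fin (r + 1)) ℂ (n + 1) ↔
      g ∈ satIdeal (Ideal.span {l} * varPowIdeal (Fin (r + 1)) ℂ (n + 1)) := by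
  refine ⟨fun h => le_satIdeal _ h, fun hsat => ?_⟩
  have hdvd : l ∣ g := Ideal.mem_span_singleton.mp <|
    satIdeal_le_span_singleton hr (hl.prime_of_degree_one hl0) Ideal.mul_le_left hsat
  obtain ⟨h, hh, rfl⟩ := hl.exists_eq_mul_of_dvd hg hdvd
  have hpow : h ∈ irrelevantIdeal r ^ ((r + 1) * n + 1) :=
    Ideal.pow_le_pow_right (by omega) hh.mem_pow_idealOfVars
  exact Ideal.mul_mem_mul (Ideal.mem_span_singleton_self l)
    (irrelevantIdeal_pow_le_varPowIdeal r n hpow)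

theorem exists_isHomogeneous_mem_satIdeal_notMem {r : ℕ} {l : PolyRing r}
    (hl : l.IsHomogeneous 1) (hl0 : l ≠ 0) (n : ℕ) :
    ∃ g : PolyRing r, g.IsHomogeneous ((r + 1) * n + 1) ∧
      g ∈ satIdeal (Ideal.span {l} * varPowIdeal (Fin (r + 1)) ℂ (n + 1)) ∧
      g ∉ Ideal.span {l} * varPowIdeal (Fin (r + 1)) ℂ (n + 1) := by
  set a : Fin (r + 1) →₀ ℕ := Finsupp.equivFunOnFinite.symm fun _ => n
  refine ⟨monomial a 1 * l, (isHomogeneous_monomial _ ?_).mul hl,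
    Ideal.mul_mem_left _ _ (mem_satIdeal_span_singleton_mul_varPowIdeal l n), ?_⟩
  · simp [a, Finsupp.degree_eq_sum]
  · rw [Ideal.mem_span_singleton_mul]
    rintro ⟨z, hz, hlz⟩
    rw [mul_comm _ l] at hlz
    rw [mul_left_cancel₀ hl0 hlz] at hz
    exact monomial_one_notMem_varPowIdeal (fun i => by simp [a]) hz

theorem satdeg_hyperplane_example (r d : ℕ) (hr : 1 ≤ r) (hd : 2 ≤ d)
    (l : PolyRing r) (hl : l.IsHomogeneous 1) (hl0 : l ≠ 0)
    (J : Ideal (PolyRing r))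
    (hJ : J = Ideal.span (Set.range fun i => (MvPolynomial.X i) ^ (d - 1) * l)) :
    IsLeast {t0 : ℕ | ∀ t, t0 ≤ t → ∀ g : PolyRing r, g.IsHomogeneous t →
        (g ∈ J ↔ g ∈ satIdeal J)}
      ((r + 1) * d - 2 * r) := by
  obtain ⟨n, rfl⟩ : ∃ n, d = n + 2 := ⟨d - 2, by omega⟩
  have hJ' : J = Ideal.span {l} * varPowIdeal (Fin (r + 1)) ℂ (n + 1) := by
    rw [hJ, varPowIdeal, Ideal.span_singleton_mul_span_range]
    rfl
  have ht0 : (r + 1) * (n + 2) - 2 * r = (r + 1) * n + 2 :=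
    Nat.sub_eq_of_eq_add (by ring)
  subst hJ'
  rw [ht0]
  refine ⟨fun t ht g hg => mem_iff_mem_satIdeal_of_isHomogeneous hr hl hl0 hg ht,
    fun s hs => ?_⟩
  obtain ⟨g, hg, hsat, hnot⟩ := exists_isHomogeneous_mem_satIdeal_notMem hl hl0 n
  by_contra! hlt
  exact hnot ((hs _ (by omega) g hg).mpr hsat)
end
end

section
/- Let O be a Noetherian local ring and I an ideal with a minimal free presentation Λ^2 U -> U -> I -> 0 coming from a Koszul complex on a regular sequence generating I (U free of rank e). Suppose instead I has an arbitrary free presentation of the form (Λ^2 U ⊕ A ⊕ B) -> (U ⊕ A) -> I -> 0 where A maps to zero in I, B maps to zero in U ⊕ A, and the left map restricts to the identity on A. Then for every a >= 1 the induced sequence S^{a-1}(U ⊕ A) ⊗ (Λ^2 U ⊕ A) -> S^a(U ⊕ A) -> I^a -> 0 is exact. -/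
/-!
Write a form `F` of degree `a ≥ 1` with `F(g) = 0` as `F = X₀ Q + R`, where `R` does not
involve `X₀`. Modulo `g₀`, `R` is a relation among the images of `g₁, …, g_{e-1}`, which form
a regular sequence in `O/(g₀)`; by induction on `e`, `R = W + g₀ T` with `W` in the Koszul
ideal. The Koszul relations `g₀ X_j ≡ g_j X₀` then turn `F` into `X₀ P` modulo Koszul
relations, so `g₀ P(g) = 0`, hence `P(g) = 0` since `g₀` is a nonzerodivisor, and induction on
`a` concludes. Homogeneity is recovered at each step by taking homogeneous components, the
Koszul ideal being homogeneous. The summand `A` only adds the relations `X_(inr j)`: setting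
those variables to zero reduces to the Koszul case.
-/

open MvPolynomial RingTheory.Sequence

open Pointwise in
theorem RingTheory.Sequence.isWeaklyRegular_cons_iff_quotient {O : Type*} [CommRing O]
    (r : O) (rs : List O) :
    IsWeaklyRegular O (r :: rs) ↔ IsSMulRegular O r ∧
      IsWeaklyRegular (O ⧸ Ideal.span {r}) (rs.map (Ideal.Quotient.mk (Ideal.span {r}))) := by
  have hsmul : r • (⊤ : Submodule O O) = (Ideal.span {r} : Ideal O) := by
    rw [← Submodule.ideal_span_singleton_smul, Ideal.smul_eq_mul, Ideal.mul_top]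
  rw [isWeaklyRegular_cons_iff, ← Ideal.Quotient.algebraMap_eq,
    isWeaklyRegular_map_algebraMap_iff,
    (Submodule.quotEquivOfEq (r • ⊤) _ hsmul).isWeaklyRegular_congr]

namespace MvPolynomial

variable {σ O : Type*} [CommRing O]

attribute [local instance] gradedAlgebra

theorem homogeneousComponent_add_mul_of_isHomogeneous {p q : MvPolynomial σ O} {k : ℕ}
    (hq : q.IsHomogeneous k) (n : ℕ) :
    homogeneousComponent (n + k) (p * q) = homogeneousComponent n p * q := by
  have hdec (x : MvPolynomial σ O) (i : ℕ) :
      (DirectSum.decompose (homogeneousSubmodule σ O) x i : MvPolynomial σ O) =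
        homogeneousComponent i x :=
    decomposition.decompose'_apply x i
  rw [← hdec, ← hdec]
  exact DirectSum.coe_decompose_mul_add_of_right_mem _ hq

theorem mem_span_range_X_of_isHomogeneous {a : ℕ} {p : MvPolynomial σ O}
    (hp : p.IsHomogeneous (a + 1)) : p ∈ Ideal.span (Set.range X) := by
  rw [← Set.image_univ, mem_ideal_span_X_image]
  intro d hd
  by_contra! h
  have := hp (mem_support_iff.mp hd)
  simp [show d = 0 from Finsupp.ext fun i => h i trivial] at this

theorem mem_span_mul_of_mem_ideal_span {s : Set (MvPolynomial σ O)}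
    (hs : ∀ l ∈ s, l.IsHomogeneous 1) {a : ℕ} {F : MvPolynomial σ O}
    (hF : F.IsHomogeneous (a + 1)) (h : F ∈ Ideal.span s) :
    F ∈ Submodule.span O
      {q | ∃ u : MvPolynomial σ O, u.IsHomogeneous a ∧ ∃ l ∈ s, q = u * l} := by
  obtain ⟨n, c, l, rfl⟩ := Submodule.mem_span_set'.mp h
  rw [← homogeneousComponent_eq_self hF, map_sum]
  refine Submodule.sum_mem _ fun i _ => Submodule.subset_span ?_
  exact ⟨_, homogeneousComponent_isHomogeneous a (c i), l i, (l i).2,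
    homogeneousComponent_add_mul_of_isHomogeneous (hs _ (l i).2) a⟩

theorem sub_rename_aeval_mem_ideal_span {τ : Type*} (f : τ → σ) (ψ : σ → MvPolynomial τ O)
    (F : MvPolynomial σ O) :
    F - rename f (aeval ψ F) ∈ Ideal.span (Set.range fun i => X i - rename f (ψ i)) := by
  set K := Ideal.span (Set.range fun i => X i - rename f (ψ i))
  have hX (i : σ) : X i - rename f (ψ i) ∈ K := Ideal.subset_span ⟨i, rfl⟩
  have : ((Ideal.Quotient.mkₐ O K).comp (rename f)).comp (aeval ψ) = Ideal.Quotient.mkₐ O K :=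
    algHom_ext fun i => by simpa [Ideal.Quotient.eq] using neg_mem (hX i)
  rw [← Ideal.Quotient.eq]
  exact (congrArg (· F) this).symm

theorem exists_eq_X_zero_mul_add_rename_succ {n : ℕ} (F : MvPolynomial (Fin (n + 1)) O) :
    ∃ Q, F = X 0 * Q +
      rename Fin.succ (aeval (Fin.cons 0 X : Fin (n + 1) → MvPolynomial (Fin n) O) F) := by
  have hle : Ideal.span (Set.range fun i => X i - rename Fin.succ
      ((Fin.cons 0 X : Fin (n + 1) → MvPolynomial (Fin n) O) i)) ≤ Ideal.span {X 0} :=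
    Ideal.span_le.mpr <| by
      rintro _ ⟨i, rfl⟩
      cases i using Fin.cases <;> simp
  obtain ⟨Q, hQ⟩ := Ideal.mem_span_singleton'.mp (hle (sub_rename_aeval_mem_ideal_span _ _ F))
  exact ⟨Q, by rw [mul_comm, hQ]; ring⟩

theorem sub_rename_inl_mem_span_X_inr {τ : Type*} (F : MvPolynomial (σ ⊕ τ) O) :
    F - rename Sum.inl (aeval (Sum.elim X 0) F) ∈ Ideal.span (Set.range (X ∘ Sum.inr)) := by
  refine Ideal.span_le.mpr ?_ (sub_rename_aeval_mem_ideal_span _ _ F)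
  rintro _ ⟨i | j, rfl⟩
  · simp
  · exact Ideal.subset_span ⟨j, by simp⟩

noncomputable def koszulForm (g : σ → O) (i j : σ) : MvPolynomial σ O :=
  C (g j) * X i - C (g i) * X j

/-- Its degree-`a` part is the image of `S^{a-1}U ⊗ Λ²U → SᵃU`. -/
noncomputable def koszulIdeal (g : σ → O) : Ideal (MvPolynomial σ O) :=
  Ideal.span {q | ∃ i j, q = koszulForm g i j}

theorem isHomogeneous_koszulForm (g : σ → O) (i j : σ) : (koszulForm g i j).IsHomogeneous 1 :=
  (isHomogeneous_C_mul_X _ _).sub (isHomogeneous_C_mul_X _ _)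

theorem koszulIdeal_le_ker_aeval (g : σ → O) : koszulIdeal g ≤ RingHom.ker (aeval g) :=
  Ideal.span_le.mpr <| by rintro _ ⟨i, j, rfl⟩; simp [koszulForm, mul_comm]

theorem isHomogeneous_koszulIdeal (g : σ → O) :
    (koszulIdeal g).IsHomogeneous (homogeneousSubmodule σ O) :=
  Ideal.homogeneous_span _ _ <| by
    rintro _ ⟨i, j, rfl⟩
    exact ⟨1, isHomogeneous_koszulForm g i j⟩

theorem map_koszulIdeal {O' : Type*} [CommRing O'] (f : O →+* O') (g : σ → O) :
    (koszulIdeal g).map (map f) = koszulIdeal (f ∘ g) := by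
  rw [koszulIdeal, koszulIdeal, Ideal.map_span]
  congr 1
  ext q
  simp [koszulForm, eq_comm]

theorem map_rename_koszulIdeal_le {τ : Type*} (f : τ → σ) (g : σ → O) :
    (koszulIdeal (g ∘ f)).map (rename f) ≤ koszulIdeal g := by
  rw [koszulIdeal, Ideal.map_span]
  refine Ideal.span_mono ?_
  rintro _ ⟨_, ⟨i, j, rfl⟩, rfl⟩
  exact ⟨f i, f j, by simp [koszulForm]⟩

theorem exists_C_mul_sub_X_mul_mem_koszulIdeal (g : σ → O) (s : σ) {p : MvPolynomial σ O}
    (hp : p ∈ Ideal.span (Set.range X)) : ∃ q, C (g s) * p - X s * q ∈ koszulIdeal g := by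
  induction hp using Submodule.span_induction with
  | mem _ h =>
    obtain ⟨t, rfl⟩ := h
    exact ⟨C (g t), Ideal.subset_span ⟨t, s, by rw [koszulForm]; ring⟩⟩
  | zero => exact ⟨0, by simp⟩
  | add _ _ _ _ h₁ h₂ =>
    obtain ⟨q₁, hq₁⟩ := h₁
    obtain ⟨q₂, hq₂⟩ := h₂
    exact ⟨q₁ + q₂, by convert add_mem hq₁ hq₂ using 1; ring⟩
  | smul c _ _ h =>
    obtain ⟨q, hq⟩ := h
    exact ⟨c * q, by convert Ideal.mul_mem_left _ c hq using 1; simp only [smul_eq_mul]; ring⟩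

theorem exists_eq_add_C_mul_of_map_mem_koszulIdeal {r : O} {g : σ → O} {d : ℕ}
    {R : MvPolynomial σ O} (hR : R.IsHomogeneous d)
    (h : map (Ideal.Quotient.mk (Ideal.span {r})) R ∈
      koszulIdeal (Ideal.Quotient.mk (Ideal.span {r}) ∘ g)) :
    ∃ W ∈ koszulIdeal g, ∃ T : MvPolynomial σ O, T.IsHomogeneous d ∧ R = W + C r * T := by
  rw [← map_koszulIdeal, Ideal.mem_map_iff_of_surjective _
    (map_surjective _ Ideal.Quotient.mk_surjective)] at h
  obtain ⟨W, hW, hWR⟩ := h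
  have hRW : R - W ∈ Ideal.span {C r} := by
    rw [← Set.image_singleton, ← Ideal.map_span, ← Ideal.mk_ker (I := Ideal.span {r}),
      ← ker_map]
    exact (RingHom.sub_mem_ker_iff _).mpr hWR.symm
  obtain ⟨T, hT⟩ := Ideal.mem_span_singleton'.mp hRW
  refine ⟨homogeneousComponent d W, homogeneousComponent_mem_of_mem
    (isHomogeneous_koszulIdeal g) hW d, homogeneousComponent d T,
    homogeneousComponent_isHomogeneous d T, ?_⟩
  rw [← homogeneousComponent_C_mul, ← map_add, mul_comm, hT, add_sub_cancel,
    homogeneousComponent_eq_self hR]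

theorem mem_koszulIdeal_of_sub_X_mul_mem {g : σ → O} {s : σ} (hs : IsSMulRegular O (g s))
    {a : ℕ}
    (ih : ∀ P : MvPolynomial σ O, P.IsHomogeneous a → aeval g P = 0 → P ∈ koszulIdeal g)
    {F P : MvPolynomial σ O} (hF : F.IsHomogeneous (a + 1)) (h : aeval g F = 0)
    (hP : F - X s * P ∈ koszulIdeal g) : F ∈ koszulIdeal g := by
  have hP' : F - X s * homogeneousComponent a P ∈ koszulIdeal g := by
    simpa [homogeneousComponent_eq_self hF, mul_comm (X s),
      homogeneousComponent_add_mul_of_isHomogeneous (isHomogeneous_X O s)] using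
      homogeneousComponent_mem_of_mem (isHomogeneous_koszulIdeal g) hP (a + 1)
  have h0 : aeval g (homogeneousComponent a P) = 0 := hs <| by
    have := koszulIdeal_le_ker_aeval g hP'
    rw [RingHom.mem_ker, map_sub, h, map_mul, aeval_X, zero_sub, neg_eq_zero] at this
    simpa using this
  simpa using add_mem hP' (Ideal.mul_mem_left _ (X s)
    (ih _ (homogeneousComponent_isHomogeneous a P) h0))

theorem exists_sub_X_zero_mul_mem_koszulIdeal {n a : ℕ} {g : Fin (n + 1) → O}
    (ih : ∀ R : MvPolynomial (Fin n) (O ⧸ Ideal.span {g 0}), R.IsHomogeneous (a + 1) →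
      aeval (Ideal.Quotient.mk (Ideal.span {g 0}) ∘ g ∘ Fin.succ) R = 0 →
        R ∈ koszulIdeal (Ideal.Quotient.mk (Ideal.span {g 0}) ∘ g ∘ Fin.succ))
    {F : MvPolynomial (Fin (n + 1)) O} (hF : F.IsHomogeneous (a + 1)) (h : aeval g F = 0) :
    ∃ P, F - X 0 * P ∈ koszulIdeal g := by
  obtain ⟨Q, hQ⟩ := exists_eq_X_zero_mul_add_rename_succ F
  set R := aeval (Fin.cons 0 X : Fin (n + 1) → MvPolynomial (Fin n) O) F
  have hR : R.IsHomogeneous (a + 1) := by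
    simpa only [one_mul] using hF.aeval _ (n := 1) fun i => by
      cases i using Fin.cases
      exacts [isHomogeneous_zero _ _ _, isHomogeneous_X _ _]
  have hR0 : aeval (Ideal.Quotient.mk (Ideal.span {g 0}) ∘ g ∘ Fin.succ)
      (map (Ideal.Quotient.mk (Ideal.span {g 0})) R) = 0 := by
    have : aeval (g ∘ Fin.succ) R = -(g 0 * aeval g Q) := by
      rw [← aeval_rename, eq_sub_of_add_eq' hQ.symm, map_sub, h, map_mul, aeval_X, zero_sub]
    rw [← Ideal.Quotient.algebraMap_eq, aeval_map_algebraMap, aeval_algebraMap_apply, this,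
      Ideal.Quotient.algebraMap_eq, Ideal.Quotient.eq_zero_iff_mem]
    exact neg_mem (Ideal.mul_mem_right _ _ (Ideal.subset_span rfl))
  obtain ⟨W, hW, T, hT, hRWT⟩ :=
    exists_eq_add_C_mul_of_map_mem_koszulIdeal hR (ih _ (hR.map _) hR0)
  obtain ⟨T', hT'⟩ := exists_C_mul_sub_X_mul_mem_koszulIdeal g 0
    (mem_span_range_X_of_isHomogeneous (hT.rename_isHomogeneous (f := Fin.succ)))
  refine ⟨Q + T', ?_⟩
  have hsplit : F - X 0 * (Q + T') =
      rename Fin.succ W + (C (g 0) * rename Fin.succ T - X 0 * T') := by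
    rw [hQ, hRWT]
    simp only [map_add, map_mul, rename_C]
    ring
  rw [hsplit]
  exact add_mem (map_rename_koszulIdeal_le _ _ (Ideal.mem_map_of_mem _ hW)) hT'

theorem mem_koszulIdeal_of_aeval_eq_zero {n : ℕ} {g : Fin n → O}
    (hg : IsWeaklyRegular O (List.ofFn g)) {a : ℕ} {F : MvPolynomial (Fin n) O}
    (hF : F.IsHomogeneous a) (h : aeval g F = 0) : F ∈ koszulIdeal g := by
  induction n generalizing O a with
  | zero =>
    rw [eq_C_of_isEmpty F] at h ⊢
    simp_all
  | succ n ih =>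
    rw [List.ofFn_succ, isWeaklyRegular_cons_iff_quotient, List.map_ofFn] at hg
    induction a generalizing F with
    | zero =>
      rw [totalDegree_eq_zero_iff_eq_C.mp (Nat.le_zero.mp hF.totalDegree_le)] at h ⊢
      simp_all
    | succ a iha =>
      obtain ⟨P, hP⟩ := exists_sub_X_zero_mul_mem_koszulIdeal (fun _ => ih hg.2) hF h
      exact mem_koszulIdeal_of_sub_X_mul_mem hg.1 (fun _ => iha) hF h hP

theorem mem_ideal_span_of_aeval_sum_elim_eq_zero {τ : Type*} {n : ℕ} {g : Fin n → O}
    (hg : IsWeaklyRegular O (List.ofFn g)) {a : ℕ} {F : MvPolynomial (Fin n ⊕ τ) O}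
    (hF : F.IsHomogeneous a) (h : aeval (Sum.elim g 0) F = 0) :
    F ∈ Ideal.span (rename Sum.inl '' {q | ∃ i j, q = koszulForm g i j} ∪
      Set.range (X ∘ Sum.inr)) := by
  set R := aeval (Sum.elim X 0 : Fin n ⊕ τ → MvPolynomial (Fin n) O) F
  have hR : R.IsHomogeneous a := by
    simpa only [one_mul] using hF.aeval _ (n := 1) <| by
      rintro (i | j)
      exacts [isHomogeneous_X _ _, isHomogeneous_zero _ _ _]
  have hR0 : aeval g R = 0 := by
    rw [← h, ← AlgHom.comp_apply, comp_aeval]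
    congr 2
    ext (i | j) <;> simp
  have hRmem := Ideal.mem_map_of_mem (rename (Sum.inl : Fin n → Fin n ⊕ τ))
    (mem_koszulIdeal_of_aeval_eq_zero hg hR hR0)
  rw [koszulIdeal, Ideal.map_span] at hRmem
  rw [← sub_add_cancel F (rename Sum.inl R)]
  exact add_mem (Ideal.span_mono Set.subset_union_right (sub_rename_inl_mem_span_X_inr F))
    (Ideal.span_mono Set.subset_union_left hRmem)

end MvPolynomial

theorem symmetric_power_arbitrary_presentation_exact_general
    (O : Type*) [CommRing O]
    (e m : ℕ) (g : Fin e → O)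
    (hreg : RingTheory.Sequence.IsRegular O (List.ofFn g))
    (I : Ideal O) (hI : I = Ideal.span (Set.range g))
    (a : ℕ) (ha : 1 ≤ a) :
    -- exactness at `Iᵃ` : `Sᵃ(U ⊕ A) → Iᵃ` is surjective
    (∀ y ∈ I ^ a, ∃ p : MvPolynomial (Fin e ⊕ Fin m) O,
      p.IsHomogeneous a ∧ aeval (Sum.elim g fun _ => (0 : O)) p = y) ∧
    -- exactness at `Sᵃ(U ⊕ A)`
    (∀ p : MvPolynomial (Fin e ⊕ Fin m) O, p.IsHomogeneous a →
      (aeval (Sum.elim g fun _ => (0 : O)) p = 0 ↔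
        p ∈ Submodule.span O
          {q : MvPolynomial (Fin e ⊕ Fin m) O |
            ∃ u : MvPolynomial (Fin e ⊕ Fin m) O, u.IsHomogeneous (a - 1) ∧
              ((∃ i j : Fin e,
                  q = u * (MvPolynomial.C (g j) * MvPolynomial.X (Sum.inl i)
                            - MvPolynomial.C (g i) * MvPolynomial.X (Sum.inl j))) ∨
               (∃ j : Fin m, q = u * MvPolynomial.X (Sum.inr j)))})) := by
  obtain ⟨b, rfl⟩ : ∃ b, a = b + 1 := ⟨a - 1, by omega⟩
  refine ⟨fun y hy => ?_, fun F hF => ⟨fun h => ?_, fun hF' => ?_⟩⟩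
  · obtain ⟨p, hp, rfl⟩ := (Ideal.mem_span_pow_iff_exists_isHomogeneous g y).mp (hI ▸ hy)
    exact ⟨rename Sum.inl p, hp.rename_isHomogeneous, by simp [aeval_rename]⟩
  · refine Submodule.span_mono ?_ (mem_span_mul_of_mem_ideal_span ?_ hF
      (mem_ideal_span_of_aeval_sum_elim_eq_zero hreg.toIsWeaklyRegular hF h))
    · rintro _ ⟨u, hu, _, (⟨_, ⟨i, j, rfl⟩, rfl⟩ | ⟨j, rfl⟩), rfl⟩
      exacts [⟨u, hu, Or.inl ⟨i, j, by simp [koszulForm]⟩⟩, ⟨u, hu, Or.inr ⟨j, rfl⟩⟩]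
    · rintro _ (⟨_, ⟨i, j, rfl⟩, rfl⟩ | ⟨j, rfl⟩)
      exacts [(isHomogeneous_koszulForm g i j).rename_isHomogeneous, isHomogeneous_X _ _]
  · refine (Submodule.span_le
      (p := LinearMap.ker (aeval (Sum.elim g fun _ => (0 : O))).toLinearMap)).mpr ?_ hF'
    rintro _ ⟨u, -, ⟨i, j, rfl⟩ | ⟨j, rfl⟩⟩ <;> simp [mul_comm]

theorem symmetric_power_arbitrary_presentation_exact
    (O : Type*) [CommRing O] [IsNoetherianRing O] [IsLocalRing O]
    (e m : ℕ) (g : Fin e → O)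
    (hreg : RingTheory.Sequence.IsRegular O (List.ofFn g))
    (I : Ideal O) (hI : I = Ideal.span (Set.range g))
    (a : ℕ) (ha : 1 ≤ a) :
    -- exactness at `Iᵃ` : `Sᵃ(U ⊕ A) → Iᵃ` is surjective
    (∀ y ∈ I ^ a, ∃ p : MvPolynomial (Fin e ⊕ Fin m) O,
      p.IsHomogeneous a ∧ aeval (Sum.elim g fun _ => (0 : O)) p = y) ∧
    -- exactness at `Sᵃ(U ⊕ A)`
    (∀ p : MvPolynomial (Fin e ⊕ Fin m) O, p.IsHomogeneous a →
      (aeval (Sum.elim g fun _ => (0 : O)) p = 0 ↔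
        p ∈ Submodule.span O
          {q : MvPolynomial (Fin e ⊕ Fin m) O |
            ∃ u : MvPolynomial (Fin e ⊕ Fin m) O, u.IsHomogeneous (a - 1) ∧
              ((∃ i j : Fin e,
                  q = u * (MvPolynomial.C (g j) * MvPolynomial.X (Sum.inl i)
                            - MvPolynomial.C (g i) * MvPolynomial.X (Sum.inl j))) ∨
               (∃ j : Fin m, q = u * MvPolynomial.X (Sum.inr j)))})) :=
  symmetric_power_arbitrary_presentation_exact_general O e m g hreg I hI a ha
end

section
/- Let Z ⊆ P^r be a complete intersection of dimension >= 0, with saturated homogeneous ideal I_Z generated by a regular sequence of homogeneous polynomials. Then for every a >= 1 the power I_Z^a is a saturated ideal (Zariski's theorem). -/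
/-!
Zariski's theorem: if `Z ⊆ ℙ^r` is a complete intersection of dimension `≥ 0`, whose
saturated homogeneous ideal `I_Z ⊆ S = ℂ[x₀,…,x_r]` is generated by a regular sequence
`f₁, …, f_e` of homogeneous polynomials of positive degrees (`e = codim Z ≤ r`), then for
every `a ≥ 1` the power `I_Z^a` is saturated.
-/

open MvPolynomial

noncomputable section

/-
Let `I = (f₁, …, f_e)`. A regular sequence is quasi-regular: a form `F` of degree `d` with
`F(f) ∈ I^(d+1)` has all its coefficients in `I`, i.e. `I^d / I^(d+1)` is free over `S/I` on the
monomials of degree `d`. Consequently any element `g` that is regular on `S/I` stays regular on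
every `S/I^a`. Such a `g` can be taken in the irrelevant ideal `𝔪`: the variables are an
`S`-regular sequence of length `r + 1` in `𝔪`, and by Rees' description of depth through
`Ext(S/𝔪, -)`, dividing by each `fᵢ` lowers the `𝔪`-depth by one, leaving `𝔪`-depth
`r + 1 - e ≥ 1` on `S/I`. Finally `x 𝔪^k ⊆ I^a` gives `x g^k ∈ I^a`, hence `x ∈ I^a`.
-/

open RingTheory.Sequence

universe u v

namespace Ideal

variable {R : Type u} [CommRing R]

def HasRegularSeq (𝔞 : Ideal R) (M : Type v) [AddCommGroup M] [Module R M] (n : ℕ) : Prop :=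
  ∃ rs : List R, rs.length = n ∧ (∀ r ∈ rs, r ∈ 𝔞) ∧ IsRegular M rs

lemma ofList_ofFn_smul_top {n : ℕ} (f : Fin n → R) :
    (ofList (List.ofFn f) • ⊤ : Submodule R R) = span (Set.range f) := by
  rw [smul_eq_mul, mul_top]
  unfold ofList
  congr 1
  ext
  simp

variable {𝔞 : Ideal R} {M : Type v} [AddCommGroup M] [Module R M]

lemma smul_top_quotSMulTop_ne_top {x : R} (hx : x ∈ 𝔞)
    (hM : 𝔞 • (⊤ : Submodule R M) ≠ ⊤) :
    𝔞 • (⊤ : Submodule R (QuotSMulTop x M)) ≠ ⊤ := by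
  intro h
  apply hM
  have := congrArg (Submodule.comap (Submodule.mkQ _)) h
  simpa [Submodule.comap_smul_top_of_surjective 𝔞 _ (Submodule.mkQ_surjective _),
    Submodule.smul_mono_left ((span_singleton_le_iff_mem 𝔞).mpr hx),
    ← Submodule.ideal_span_singleton_smul] using this

namespace HasRegularSeq

lemma of_linearEquiv {M₂ : Type*} [AddCommGroup M₂] [Module R M₂] {n : ℕ}
    (h : 𝔞.HasRegularSeq M n) (e : M ≃ₗ[R] M₂) : 𝔞.HasRegularSeq M₂ n :=
  let ⟨rs, hlen, hmem, hrs⟩ := h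
  ⟨rs, hlen, hmem, (e.isRegular_congr rs).mp hrs⟩

lemma exists_isSMulRegular {n : ℕ} (h : 𝔞.HasRegularSeq M (n + 1)) :
    ∃ x ∈ 𝔞, IsSMulRegular M x := by
  obtain ⟨_ | ⟨x, rs⟩, hlen, hmem, hrs⟩ := h
  · simp at hlen
  · exact ⟨x, hmem x List.mem_cons_self, ((isRegular_cons_iff M x rs).mp hrs).1⟩

open CategoryTheory Abelian in
/-- By Rees' theorem both depths are read off `Ext(R/𝔞, -)`, and the long exact sequence of
`0 → M → M → M/xM → 0` lowers the vanishing range by one. -/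
lemma quotSMulTop [Small.{v} R] [IsNoetherianRing R] [Module.Finite R M]
    {n : ℕ} (h : 𝔞.HasRegularSeq M (n + 1)) (hM : 𝔞 • (⊤ : Submodule R M) ≠ ⊤)
    {x : R} (hx𝔞 : x ∈ 𝔞) (hx : IsSMulRegular M x) :
    𝔞.HasRegularSeq (QuotSMulTop x M) n := by
  let N := ModuleCat.of R (Shrink.{v} (R ⧸ 𝔞))
  have hext : ∀ i < n + 1, Subsingleton (Ext N (ModuleCat.of R M) i) :=
    ((ModuleCat.exists_isRegular_tfae 𝔞 (n + 1) (ModuleCat.of R M) hM.lt_top).out 1 3).mpr h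
  have hext' : ∀ i < n, Subsingleton (Ext N (ModuleCat.of R (QuotSMulTop x M)) i) := by
    intro i hi
    have h₁ := AddCommGrpCat.isZero_of_iff_subsingleton.mpr (hext i (by omega))
    have h₂ := AddCommGrpCat.isZero_of_iff_subsingleton.mpr (hext (i + 1) (by omega))
    have hx' : IsSMulRegular (ModuleCat.of R M) x := hx
    exact AddCommGrpCat.subsingleton_of_isZero <| ShortComplex.Exact.isZero_of_both_zeros
      ((Ext.covariant_sequence_exact₃' N hx'.smulShortComplex_shortExact) i (i + 1) rfl)
      (h₁.eq_zero_of_src _) (h₂.eq_zero_of_tgt _)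
  exact ((ModuleCat.exists_isRegular_tfae 𝔞 n (ModuleCat.of R (QuotSMulTop x M))
    (smul_top_quotSMulTop_ne_top hx𝔞 hM).lt_top).out 1 3).mp hext'

lemma quotient_ofList [Small.{v} R] [IsNoetherianRing R] [Module.Finite R M]
    (hM : 𝔞 • (⊤ : Submodule R M) ≠ ⊤) {xs : List R} (hxs : IsWeaklyRegular M xs)
    (hxs𝔞 : ∀ x ∈ xs, x ∈ 𝔞) {n : ℕ} (h : 𝔞.HasRegularSeq M (n + xs.length)) :
    𝔞.HasRegularSeq (M ⧸ ofList xs • (⊤ : Submodule R M)) n := by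
  induction xs generalizing M with
  | nil =>
    exact h.of_linearEquiv (Submodule.quotEquivOfEqBot _ (by simp)).symm
  | cons x xs ih =>
    rw [isWeaklyRegular_cons_iff] at hxs
    have hx𝔞 := hxs𝔞 x List.mem_cons_self
    refine HasRegularSeq.of_linearEquiv ?_
      (Submodule.quotOfListConsSMulTopEquivQuotSMulTopInner M x xs).symm
    exact ih (smul_top_quotSMulTop_ne_top hx𝔞 hM) hxs.2
      (fun y hy => hxs𝔞 y (List.mem_cons_of_mem x hy))
      (quotSMulTop (by simpa [Nat.add_assoc] using h) hM hx𝔞 hxs.1)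

end HasRegularSeq

end Ideal

namespace MvPolynomial

variable {σ A : Type*} [CommRing A]

lemma isSMulRegular_X_quotient_span_X_image {s : Set σ} {i : σ} (hi : i ∉ s) :
    IsSMulRegular (MvPolynomial σ A ⧸ Ideal.span ((X : σ → MvPolynomial σ A) '' s))
      (X i : MvPolynomial σ A) := by
  classical
  refine (isSMulRegular_quotient_iff_mem_of_smul_mem _ _).mpr fun p hp => ?_
  rw [smul_eq_mul, mem_ideal_span_X_image] at hp
  rw [mem_ideal_span_X_image]
  intro m hm
  have hm' : Finsupp.single i 1 + m ∈ (X i * p).support := by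
    rwa [mem_support_iff, coeff_X_mul, ← mem_support_iff]
  obtain ⟨j, hj, hjm⟩ := hp _ hm'
  refine ⟨j, hj, ?_⟩
  rwa [Finsupp.add_apply, Finsupp.single_eq_of_ne (by rintro rfl; exact hi hj), zero_add] at hjm

lemma isWeaklyRegular_map_X {l : List σ} (hl : l.Nodup) :
    IsWeaklyRegular (MvPolynomial σ A) (l.map (X : σ → MvPolynomial σ A)) := by
  refine (isWeaklyRegular_iff _ _).mpr fun k hk => ?_
  have hk' : k < l.length := by simpa using hk
  have hspan : (Ideal.ofList ((l.map (X : σ → MvPolynomial σ A)).take k) • ⊤ :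
      Submodule (MvPolynomial σ A) (MvPolynomial σ A)) =
      Ideal.span ((X : σ → MvPolynomial σ A) '' {j | j ∈ l.take k}) := by
    rw [Ideal.smul_eq_mul, Ideal.mul_top, Ideal.ofList]
    congr 1
    ext p
    simp [← List.map_take]
  rw [hspan, List.getElem_map]
  refine isSMulRegular_X_quotient_span_X_image fun hmem => ?_
  refine List.disjoint_take_drop hl le_rfl hmem ?_
  rw [List.drop_eq_getElem_cons hk']
  exact List.mem_cons_self

lemma idealOfVars_ne_top [Nontrivial A] : idealOfVars σ A ≠ ⊤ := fun h => by
  simpa using (C_mem_pow_idealOfVars_iff (σ := σ) 1 (1 : A)).mp (by simp [h])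

lemma IsHomogeneous.mem_idealOfVars {F : MvPolynomial σ A} {d : ℕ} (hF : F.IsHomogeneous d)
    (hd : d ≠ 0) : F ∈ idealOfVars σ A := by
  refine pow_one (idealOfVars σ A) ▸ (mem_pow_idealOfVars_iff 1 F).mpr fun m hm => ?_
  have hm : Finsupp.weight 1 m = d := hF (mem_support_iff.mp hm)
  rw [Finsupp.degree_eq_weight_one]
  exact hm ▸ Nat.one_le_iff_ne_zero.mpr hd

lemma idealOfVars_hasRegularSeq [Nontrivial A] (n : ℕ) :
    (idealOfVars (Fin n) A).HasRegularSeq (MvPolynomial (Fin n) A) n := by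
  refine ⟨List.ofFn X, List.length_ofFn, fun x hx => ?_, ⟨?_, ?_⟩⟩
  · obtain ⟨i, rfl⟩ := List.mem_ofFn.mp hx
    exact Ideal.subset_span ⟨i, rfl⟩
  · rw [List.ofFn_eq_map]
    exact isWeaklyRegular_map_X (List.nodup_finRange n)
  · rw [Ideal.ofList_ofFn_smul_top]
    exact idealOfVars_ne_top.symm

lemma eval_mem_span_pow_succ_of_mem_map_C {f : σ → A} {F : MvPolynomial σ A} {d : ℕ}
    (hF : F.IsHomogeneous d) (hFI : F ∈ Ideal.map C (Ideal.span (Set.range f))) :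
    eval f F ∈ Ideal.span (Set.range f) ^ (d + 1) := by
  rw [F.as_sum, map_sum]
  refine Ideal.sum_mem _ fun m hm => ?_
  rw [← mul_one (coeff m F), ← C_mul_monomial, map_mul, eval_C, pow_succ']
  refine Ideal.mul_mem_mul (mem_map_C_iff.mp hFI m)
    ((Ideal.mem_span_pow_iff_exists_isHomogeneous f _).mpr ⟨_, ?_, rfl⟩)
  exact isHomogeneous_monomial _ (by
    rw [Finsupp.degree_eq_weight_one]; exact hF (mem_support_iff.mp hm))

lemma exists_isHomogeneous_mem_map_C_eval_eq {f : σ → A} {x : A} {d : ℕ}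
    (hx : x ∈ Ideal.span (Set.range f) ^ (d + 1)) :
    ∃ G : MvPolynomial σ A, G.IsHomogeneous d ∧
      G ∈ Ideal.map C (Ideal.span (Set.range f)) ∧ eval f G = x := by
  rw [pow_succ'] at hx
  induction hx using Submodule.mul_induction_on' with
  | mem_mul_mem a ha y hy =>
    obtain ⟨F, hF, rfl⟩ := (Ideal.mem_span_pow_iff_exists_isHomogeneous f y).mp hy
    exact ⟨C a * F, hF.C_mul a, Ideal.mul_mem_right _ _ (Ideal.mem_map_of_mem C ha),
      by rw [map_mul, eval_C]⟩
  | add x _ y _ hx hy =>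
    obtain ⟨F, hF, hFI, rfl⟩ := hx
    obtain ⟨G, hG, hGI, rfl⟩ := hy
    exact ⟨F + G, hF.add hG, add_mem hFI hGI, map_add _ _ _⟩

lemma IsHomogeneous.of_X_mul {F : MvPolynomial σ A} {i : σ} {k : ℕ}
    (h : (X i * F).IsHomogeneous (k + 1)) : F.IsHomogeneous k := by
  classical
  intro m hm
  have := h (show coeff (Finsupp.single i 1 + m) (X i * F) ≠ 0 by rwa [coeff_X_mul])
  simp only [map_add, Finsupp.weight_single, Pi.one_apply, smul_eq_mul, mul_one] at this
  omega

lemma exists_eq_rename_castSucc_add_X_last_mul {n k : ℕ} {F : MvPolynomial (Fin (n + 1)) A}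
    (hF : F.IsHomogeneous (k + 1)) :
    ∃ (P : MvPolynomial (Fin n) A) (Q : MvPolynomial (Fin (n + 1)) A),
      P.IsHomogeneous (k + 1) ∧ Q.IsHomogeneous k ∧
      F = rename Fin.castSucc P + X (Fin.last n) * Q := by
  set P := aeval (Fin.lastCases 0 X : Fin (n + 1) → MvPolynomial (Fin n) A) F
  have hP : P.IsHomogeneous (k + 1) := by
    simpa using hF.aeval _ (n := 1) (Fin.lastCases (by simpa using isHomogeneous_zero _ _ _)
      fun i => by simpa using isHomogeneous_X A i)
  have hmem : F - rename Fin.castSucc P ∈ Ideal.span {X (Fin.last n)} := by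
    have hcomp : (Ideal.Quotient.mkₐ A (Ideal.span {X (Fin.last n)})).comp
        ((rename Fin.castSucc).comp (aeval (Fin.lastCases 0 X))) =
        Ideal.Quotient.mkₐ A (Ideal.span {X (Fin.last n)}) := by
      refine algHom_ext fun i => ?_
      induction i using Fin.lastCases <;> simp
    rw [← Ideal.Quotient.eq]
    exact (DFunLike.congr_fun hcomp F).symm
  obtain ⟨Q, hQ⟩ := Ideal.mem_span_singleton'.mp hmem
  refine ⟨P, Q, hP, IsHomogeneous.of_X_mul (i := Fin.last n) ?_, ?_⟩
  · rw [mul_comm, hQ]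
    exact hF.sub hP.rename_isHomogeneous
  · rw [mul_comm, hQ]
    ring

end MvPolynomial

variable {A ι : Type*} [CommRing A]

/-- Quasi-regularity in the sense of Matsumura: `F ∈ Ideal.map C I` says that every coefficient
of `F` lies in `I`, so this is injectivity of `(A ⧸ I)[T] → gr_I A`, `T ↦ f`. -/
def IsQuasiRegularSeq (f : ι → A) : Prop :=
  ∀ (d : ℕ) (F : MvPolynomial ι A), F.IsHomogeneous d →
    eval f F ∈ Ideal.span (Set.range f) ^ (d + 1) → F ∈ Ideal.map C (Ideal.span (Set.range f))

namespace IsQuasiRegularSeq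

variable {f : ι → A}

theorem isSMulRegular_quotient_pow (hf : IsQuasiRegularSeq f) {g : A}
    (hg : IsSMulRegular (A ⧸ Ideal.span (Set.range f)) g) (b : ℕ) :
    IsSMulRegular (A ⧸ Ideal.span (Set.range f) ^ b) g := by
  rw [isSMulRegular_quotient_iff_mem_of_smul_mem] at hg ⊢
  induction b with
  | zero => simp
  | succ b ih =>
    intro x hx
    obtain ⟨F, hF, rfl⟩ := (Ideal.mem_span_pow_iff_exists_isHomogeneous f x).mp
      (ih x (Ideal.pow_le_pow_right b.le_succ hx))
    have hgF := hf b (C g * F) (hF.C_mul g) (by rwa [map_mul, eval_C])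
    refine eval_mem_span_pow_succ_of_mem_map_C hF (mem_map_C_iff.mpr fun m => hg _ ?_)
    simpa using mem_map_C_iff.mp hgF m

end IsQuasiRegularSeq

lemma mem_map_C_of_eval_mem_pow_succ {f : ι → A} {d : ℕ}
    (hsyz : ∀ G : MvPolynomial ι A, G.IsHomogeneous d → eval f G = 0 →
      G ∈ Ideal.map C (Ideal.span (Set.range f)))
    {F : MvPolynomial ι A} (hF : F.IsHomogeneous d)
    (hx : eval f F ∈ Ideal.span (Set.range f) ^ (d + 1)) :
    F ∈ Ideal.map C (Ideal.span (Set.range f)) := by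
  obtain ⟨G, hG, hGI, hGF⟩ := exists_isHomogeneous_mem_map_C_eval_eq hx
  have := hsyz (F - G) (hF.sub hG) (by rw [map_sub, hGF, sub_self])
  simpa using add_mem this hGI

/-- Write `F = P(T₀, …, Tₙ₋₁) + Tₙ Q`. As `g = f (last n)` is regular modulo `I'^(k+1)`, the
relation `P(f') + g Q(f) = 0` puts `Q(f)` in `I'^(k+1)`, so `Q` has coefficients in `I` by `hk`;
writing `Q(f) = R(f')` then makes `P + g R` a syzygy of `f'`. -/
lemma IsQuasiRegularSeq.mem_map_C_of_eval_eq_zero_snoc {n k : ℕ} {f : Fin (n + 1) → A}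
    (hf : IsQuasiRegularSeq (f ∘ Fin.castSucc))
    (hg : IsSMulRegular (A ⧸ Ideal.span (Set.range (f ∘ Fin.castSucc)) ^ (k + 1))
      (f (Fin.last n)))
    (hk : ∀ Q : MvPolynomial (Fin (n + 1)) A, Q.IsHomogeneous k →
      eval f Q ∈ Ideal.span (Set.range f) ^ (k + 1) →
        Q ∈ Ideal.map C (Ideal.span (Set.range f)))
    {F : MvPolynomial (Fin (n + 1)) A} (hF : F.IsHomogeneous (k + 1)) (h0 : eval f F = 0) :
    F ∈ Ideal.map C (Ideal.span (Set.range f)) := by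
  set I := Ideal.span (Set.range f)
  set I' := Ideal.span (Set.range (f ∘ Fin.castSucc))
  set g := f (Fin.last n)
  have hI'I : I' ≤ I := Ideal.span_mono (Set.range_comp_subset_range _ _)
  have hgI : g ∈ I := Ideal.subset_span ⟨_, rfl⟩
  obtain ⟨P, Q, hP, hQ, rfl⟩ := exists_eq_rename_castSucc_add_X_last_mul hF
  have heval : eval (f ∘ Fin.castSucc) P + g * eval f Q = 0 := by
    simpa [eval_rename] using h0
  have hPI' : eval (f ∘ Fin.castSucc) P ∈ I' ^ (k + 1) :=
    (Ideal.mem_span_pow_iff_exists_isHomogeneous _ _).mpr ⟨P, hP, rfl⟩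
  have hQI' : eval f Q ∈ I' ^ (k + 1) := by
    refine (isSMulRegular_quotient_iff_mem_of_smul_mem _ _).mp hg _ ?_
    rw [smul_eq_mul, eq_neg_of_add_eq_zero_right heval]
    exact neg_mem hPI'
  have hQI : Q ∈ Ideal.map C I := hk Q hQ (Ideal.pow_right_mono hI'I _ hQI')
  obtain ⟨R, hR, hRQ⟩ := (Ideal.mem_span_pow_iff_exists_isHomogeneous _ _).mp hQI'
  have hPR : P + C g * R ∈ Ideal.map C I' :=
    hf (k + 1) _ (hP.add (hR.C_mul g)) (by simp [hRQ, heval])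
  have hPI : P ∈ Ideal.map C I := by
    have := sub_mem (Ideal.map_mono hI'I hPR)
      (Ideal.mul_mem_right R _ (Ideal.mem_map_of_mem C hgI))
    rwa [add_sub_cancel_right] at this
  refine add_mem ?_ (Ideal.mul_mem_left _ _ hQI)
  have := Ideal.mem_map_of_mem
    (rename Fin.castSucc : _ →ₐ[A] MvPolynomial (Fin (n + 1)) A).toRingHom hPI
  rwa [Ideal.map_map, show (rename Fin.castSucc).toRingHom.comp C = C from
    RingHom.ext (rename_C _)] at this

theorem isQuasiRegularSeq_of_isWeaklyRegular :
    ∀ {n : ℕ} (f : Fin n → A), IsWeaklyRegular A (List.ofFn f) → IsQuasiRegularSeq f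
  | 0, f, _ => fun d F _ hF => by
    rw [Set.range_eq_empty, Ideal.span_empty, Ideal.map_bot, Ideal.mem_bot]
    rw [Set.range_eq_empty, Ideal.span_empty, Ideal.bot_pow d.succ_ne_zero, Ideal.mem_bot,
      eq_C_of_isEmpty F, eval_C] at hF
    rw [eq_C_of_isEmpty F, hF, C_0]
  | n + 1, f, hf => by
    rw [List.ofFn_succ', List.concat_eq_append, isWeaklyRegular_append_iff,
      isWeaklyRegular_singleton_iff, Ideal.ofList_ofFn_smul_top] at hf
    have hf' := isQuasiRegularSeq_of_isWeaklyRegular _ hf.1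
    intro d
    induction d using Nat.strong_induction_on with
    | _ d ih =>
      intro F hF hx
      refine mem_map_C_of_eval_mem_pow_succ (fun G hG h0 => ?_) hF hx
      rcases d with _ | k
      · rw [← homogeneousComponent_eq_self hG, homogeneousComponent_zero] at h0 ⊢
        rw [eval_C] at h0
        rw [h0, C_0]
        exact zero_mem _
      · exact hf'.mem_map_C_of_eval_eq_zero_snoc (hf'.isSMulRegular_quotient_pow hf.2 _)
          (ih k k.lt_succ_self) hG h0

lemma Ideal.colon_pow_eq_self_of_isSMulRegular {J 𝔪 : Ideal A} {g : A} (hg𝔪 : g ∈ 𝔪)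
    (hg : IsSMulRegular (A ⧸ J) g) (k : ℕ) : J.colon ((𝔪 ^ k : Ideal A) : Set A) = J := by
  refine le_antisymm (fun x hx => ?_) Ideal.le_colon
  refine (isSMulRegular_quotient_iff_mem_of_smul_mem _ _).mp (hg.pow k) x ?_
  simpa [mul_comm] using Submodule.mem_colon.mp hx _ (Ideal.pow_mem_pow hg𝔪 k)

theorem complete_intersection_powers_saturated_general (r e : ℕ) (he : e ≤ r)
    (f : Fin e → PolyRing r)
    (hhom : ∀ i, ∃ d : ℕ, 0 < d ∧ (f i).IsHomogeneous d)
    (hreg : RingTheory.Sequence.IsRegular (PolyRing r) (List.ofFn f))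
    (I : Ideal (PolyRing r)) (hI : I = Ideal.span (Set.range f))
    (a : ℕ) :
    satIdeal (I ^ a) = I ^ a := by
  subst hI
  have h𝔪 : irrelevantIdeal r = idealOfVars (Fin (r + 1)) ℂ := rfl
  have hf𝔪 : ∀ x ∈ List.ofFn f, x ∈ idealOfVars (Fin (r + 1)) ℂ := by
    intro x hx
    obtain ⟨i, rfl⟩ := List.mem_ofFn.mp hx
    obtain ⟨d, hd, hfd⟩ := hhom i
    exact hfd.mem_idealOfVars hd.ne'
  have hdepth := Ideal.HasRegularSeq.quotient_ofList
    (by rw [Ideal.smul_eq_mul, Ideal.mul_top]; exact idealOfVars_ne_top)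
    hreg.toIsWeaklyRegular hf𝔪 (n := r - e + 1)
    (by simpa [show r - e + 1 + e = r + 1 by omega] using idealOfVars_hasRegularSeq (r + 1))
  rw [Ideal.ofList_ofFn_smul_top] at hdepth
  obtain ⟨g, hg𝔪, hg⟩ := hdepth.exists_isSMulRegular
  have hQR := isQuasiRegularSeq_of_isWeaklyRegular f hreg.toIsWeaklyRegular
  unfold satIdeal
  simp_rw [h𝔪,
    Ideal.colon_pow_eq_self_of_isSMulRegular hg𝔪 (hQR.isSMulRegular_quotient_pow hg a)]
  exact iSup_const

theorem complete_intersection_powers_saturated (r e : ℕ) (he : e ≤ r)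
    (f : Fin e → PolyRing r)
    (hhom : ∀ i, ∃ d : ℕ, 0 < d ∧ (f i).IsHomogeneous d)
    (hreg : RingTheory.Sequence.IsRegular (PolyRing r) (List.ofFn f))
    (I : Ideal (PolyRing r)) (hI : I = Ideal.span (Set.range f))
    (a : ℕ) (ha : 1 ≤ a) :
    satIdeal (I ^ a) = I ^ a :=
  complete_intersection_powers_saturated_general r e he f hhom hreg I hI a
end
end
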